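/- arXiv:1706.00135 — 6 statements merged into one kernel-verified Lean document; each statement's English description precedes it below -/
import Mathlib

section
/- For any unital quantale Q and any nonempty set X, the map sending a kernel k ∈ Q^(X×X) to the Q-module transform h_k (defined by h_k(f)(y) = ⋁_{x∈X} f(x)·k(x,y)) is a quantale isomorphism from the matrix quantale M_X(Q) (with pointwise joins and product (h⋆k)(x,y) = ⋁_{z∈X} h(x,z)·k(z,y), unit the identity matrix) onto the quantale End_Q(Q^X) of Q-module endomorphisms of Q^X (with pointwise joins and multiplication h₁h₂ := h₂ ∘ h₁). -/
/-- The `Q`-module transform `h_k : Q^X → Q^X` with kernel `k ∈ Q^(X×X)`,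
defined by `h_k f y = ⨆ x, f x * k x y`. -/
def hk {Q : Type*} [Monoid Q] [CompleteLattice Q] {X : Type*} (k : X → X → Q)
    (f : X → Q) : X → Q := fun y => ⨆ x, f x * k x y

/-- A map `h : Q^X → Q^X` is a `Q`-module endomorphism of the free module `Q^X`:
it preserves arbitrary joins and the (pointwise) scalar multiplication. -/
def IsEndo {Q : Type*} [Monoid Q] [CompleteLattice Q] {X : Type*}
    (h : (X → Q) → (X → Q)) : Prop :=
  (∀ S : Set (X → Q), h (sSup S) = ⨆ f ∈ S, h f) ∧
  (∀ (a : Q) (f : X → Q), h (fun x => a * f x) = fun x => a * h f x)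

/-- The matrix product `(h ⋆ k)(x,y) = ⨆ z, h x z * k z y` of the matrix quantale `M_X(Q)`. -/
def matStar {Q : Type*} [Monoid Q] [CompleteLattice Q] {X : Type*} (k l : X → X → Q) :
    X → X → Q := fun x y => ⨆ z, k x z * l z y

/-- The identity matrix, unit of the matrix quantale `M_X(Q)`. -/
def matId (Q X : Type*) [Monoid Q] [CompleteLattice Q] [DecidableEq X] :
    X → X → Q := fun x y => if x = y then 1 else ⊥

open Quantale

/-!
`Q^X` is the free `Q`-module on `X`, with basis the rows `matId Q X x` of the
identity matrix. The transform `hk k` sends the basis vector at `x` to the row `k x`, so `k` is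
recovered from `hk k`, and an endomorphism `h` is the transform of the matrix whose rows are the
images of the basis vectors. The remaining identities are interchanges of joins together with
distributivity and associativity of the multiplication.
-/

section Transform

variable {Q X : Type*} [Monoid Q] [CompleteLattice Q] [IsQuantale Q]

theorem hk_map_sSup (k : X → X → Q) (S : Set (X → Q)) : hk k (sSup S) = ⨆ f ∈ S, hk k f := by
  funext y
  simp only [hk, sSup_apply, iSup_apply, iSup_mul_distrib]
  rw [iSup_comm, iSup_subtype']

theorem hk_smul (k : X → X → Q) (a : Q) (f : X → Q) :
    hk k (fun x => a * f x) = fun y => a * hk k f y := by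
  funext y
  simp only [hk, mul_iSup_distrib, mul_assoc]

theorem isEndo_hk (k : X → X → Q) : IsEndo (hk k) :=
  ⟨hk_map_sSup k, hk_smul k⟩

theorem hk_sSup (K : Set (X → X → Q)) : hk (sSup K) = ⨆ k ∈ K, hk k := by
  funext f y
  simp only [hk, iSup_apply, sSup_apply, mul_iSup_distrib]
  rw [iSup_comm, iSup_subtype']

theorem hk_matStar (k l : X → X → Q) : hk (matStar k l) = hk l ∘ hk k := by
  funext f y
  simp only [hk, matStar, Function.comp_apply, mul_iSup_distrib, iSup_mul_distrib, mul_assoc]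
  exact iSup_comm

section IdentityMatrix

variable [DecidableEq X]

theorem hk_matId : hk (matId Q X) = id := by
  funext f y
  simp only [hk, matId, mul_ite, mul_one, mul_bot, id]
  simp only [← iSup_eq_if, iSup_iSup_eq_left]

theorem hk_matId_row (k : X → X → Q) (x : X) : hk k (matId Q X x) = k x := by
  funext y
  simp only [hk, matId, ite_mul, one_mul, bot_mul]
  simp only [← iSup_eq_if, iSup_iSup_eq_right]

theorem hk_injective : Function.Injective (hk : (X → X → Q) → (X → Q) → (X → Q)) := by
  intro k l hkl
  funext x
  rw [← hk_matId_row k x, ← hk_matId_row l x, hkl]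

theorem iSup_smul_matId_row (f : X → Q) : ⨆ x, (fun y => f x * matId Q X x y) = f := by
  funext y
  rw [iSup_apply]
  exact congrFun (congrFun hk_matId f) y

theorem IsEndo.hk_comp_matId {h : (X → Q) → (X → Q)} (hh : IsEndo h) :
    hk (h ∘ matId Q X) = h := by
  funext f
  conv_rhs => rw [← iSup_smul_matId_row f, iSup, hh.1, iSup_range]
  funext y
  simp only [iSup_apply, hh.2, hk, Function.comp_apply]

end IdentityMatrix

end Transform

theorem quantale_matrix_iso_endomorphisms_general (Q X : Type*) [Monoid Q] [CompleteLattice Q]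
    [IsQuantale Q] [DecidableEq X] :
    (∀ k : X → X → Q, IsEndo (hk k)) ∧
    Function.Injective (hk : (X → X → Q) → (X → Q) → (X → Q)) ∧
    (∀ h : (X → Q) → (X → Q), IsEndo h → ∃ k : X → X → Q, hk k = h) ∧
    (∀ K : Set (X → X → Q), hk (sSup K) = ⨆ k ∈ K, hk k) ∧
    (∀ k l : X → X → Q, hk (matStar k l) = hk l ∘ hk k) ∧
    (hk (matId Q X) = id) :=
  ⟨isEndo_hk, hk_injective, fun _ hh => ⟨_, hh.hk_comp_matId⟩, hk_sSup, hk_matStar, hk_matId⟩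

/-- **Theorem (matrix quantale vs. endomorphism quantale).**
For a unital quantale `Q` and a nonempty set `X`, the map `k ↦ h_k` is a quantale isomorphism
from `M_X(Q)` (pointwise joins, product `⋆`, unit the identity matrix) onto
`End_Q(Q^X)` (pointwise joins, product `h₁h₂ := h₂ ∘ h₁`, unit the identity map):
it takes values in the endomorphisms, is injective, surjective onto the endomorphisms,
preserves arbitrary joins, turns `⋆` into reversed composition, and the identity matrix
into the identity map. -/
theorem quantale_matrix_iso_endomorphisms (Q X : Type*) [Monoid Q] [CompleteLattice Q]
    [IsQuantale Q] [DecidableEq X] [Nonempty X] :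
    (∀ k : X → X → Q, IsEndo (hk k)) ∧
    Function.Injective (hk : (X → X → Q) → (X → Q) → (X → Q)) ∧
    (∀ h : (X → Q) → (X → Q), IsEndo h → ∃ k : X → X → Q, hk k = h) ∧
    (∀ K : Set (X → X → Q), hk (sSup K) = ⨆ k ∈ K, hk k) ∧
    (∀ k l : X → X → Q, hk (matStar k l) = hk l ∘ hk k) ∧
    (hk (matId Q X) = id) :=
  quantale_matrix_iso_endomorphisms_general Q X
end

section
/- For any unital quantale Q, any Q-module M, and any subset S ⊆ M, the Q-ideal generated by S equals the interval [⊥, ⊤∗⋁S]. In particular every Q-ideal is principal. -/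
/-- A (left) module over a unital quantale `Q`: a complete lattice with a scalar
multiplication satisfying `(a*b)•v = a•(b•v)`, distributivity over arbitrary joins
in both arguments, and `1•v = v`. -/
class QuantaleModule (Q M : Type*) [Monoid Q] [CompleteLattice Q]
    [CompleteLattice M] extends SMul Q M where
  mul_smul : ∀ (a b : Q) (v : M), (a * b) • v = a • b • v
  smul_sSup : ∀ (a : Q) (S : Set M), a • sSup S = ⨆ v ∈ S, a • v
  sSup_smul : ∀ (S : Set Q) (v : M), sSup S • v = ⨆ a ∈ S, a • v
  one_smul : ∀ v : M, (1 : Q) • v = v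

/-- A `Q`-ideal of a `Q`-module `M`: closed under arbitrary joins, downward closed,
and closed under scalar multiplication. -/
def IsIdeal (Q : Type*) {M : Type*} [Monoid Q] [CompleteLattice Q] [CompleteLattice M]
    [QuantaleModule Q M] (I : Set M) : Prop :=
  (∀ S ⊆ I, sSup S ∈ I) ∧ (∀ v ∈ I, ∀ w, w ≤ v → w ∈ I) ∧ (∀ v ∈ I, ∀ a : Q, a • v ∈ I)


section Aux
variable {Q M : Type*} [Monoid Q] [CompleteLattice Q] [CompleteLattice M] [QuantaleModule Q M]

lemma qm_smul_mono_right (a : Q) {v w : M} (h : v ≤ w) : a • v ≤ a • w := by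
  have : a • sSup {v, w} = (a • v) ⊔ (a • w) := by
    rw [QuantaleModule.smul_sSup, iSup_pair]
  have h2 : sSup ({v, w} : Set M) = w := by
    rw [sSup_pair, sup_eq_right.mpr h]
  rw [h2] at this
  calc a • v ≤ (a • v) ⊔ (a • w) := le_sup_left
    _ = a • w := this.symm

lemma qm_smul_mono_left {a b : Q} (h : a ≤ b) (v : M) : a • v ≤ b • v := by
  have : sSup ({a, b} : Set Q) • v = (a • v) ⊔ (b • v) := by
    rw [QuantaleModule.sSup_smul, iSup_pair]
  have h2 : sSup ({a, b} : Set Q) = b := by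
    rw [sSup_pair, sup_eq_right.mpr h]
  rw [h2] at this
  calc a • v ≤ (a • v) ⊔ (b • v) := le_sup_left
    _ = b • v := this.symm

lemma le_top_smul (v : M) : v ≤ (⊤ : Q) • v := by
  calc v = (1 : Q) • v := (QuantaleModule.one_smul v).symm
    _ ≤ (⊤ : Q) • v := qm_smul_mono_left le_top v

lemma icc_isIdeal (m : M) : IsIdeal Q (Set.Icc ⊥ ((⊤ : Q) • m)) := by
  refine ⟨?_, ?_, ?_⟩
  · intro T hT
    refine ⟨bot_le, sSup_le fun x hx => (hT hx).2⟩
  · intro v hv w hw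
    exact ⟨bot_le, hw.trans hv.2⟩
  · intro v hv a
    refine ⟨bot_le, ?_⟩
    calc a • v ≤ a • ((⊤:Q) • m) := qm_smul_mono_right a hv.2
      _ = (a * ⊤) • m := (QuantaleModule.mul_smul a ⊤ m).symm
      _ ≤ (⊤:Q) • m := qm_smul_mono_left le_top m

end Aux

/-- **Theorem.** For any subset `S` of a `Q`-module `M`, the `Q`-ideal generated by `S`
(the intersection of all `Q`-ideals containing `S`) equals `[⊥, ⊤ • ⋁S]`.
In particular every `Q`-ideal is principal (generated by a single element). -/
theorem ideal_generated_by (Q M : Type*) [Monoid Q] [CompleteLattice Q] [IsQuantale Q]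
    [CompleteLattice M] [QuantaleModule Q M] :
    (∀ S : Set M, ⋂₀ {I : Set M | IsIdeal Q I ∧ S ⊆ I} = Set.Icc ⊥ ((⊤ : Q) • sSup S)) ∧
    (∀ I : Set M, IsIdeal Q I → ∃ v : M, I = ⋂₀ {J : Set M | IsIdeal Q J ∧ v ∈ J}) := by

  have main : ∀ S : Set M, ⋂₀ {I : Set M | IsIdeal Q I ∧ S ⊆ I} = Set.Icc ⊥ ((⊤ : Q) • sSup S) := by
    intro S
    apply Set.Subset.antisymm
    · intro x hx
      exact hx _ ⟨icc_isIdeal (sSup S), fun v hv =>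
        ⟨bot_le, (le_sSup hv).trans (le_top_smul (sSup S))⟩⟩
    · intro x hx I hI
      obtain ⟨⟨hjoin, hdown, hsmul⟩, hSI⟩ := hI
      have h1 : sSup S ∈ I := hjoin S hSI
      have h2 : (⊤ : Q) • sSup S ∈ I := hsmul _ h1 ⊤
      exact hdown _ h2 x hx.2
  refine ⟨main, fun I hI => ⟨sSup I, ?_⟩⟩
  have : ⋂₀ {J : Set M | IsIdeal Q J ∧ sSup I ∈ J} = ⋂₀ {J : Set M | IsIdeal Q J ∧ ({sSup I} : Set M) ⊆ J} := by
    simp [Set.singleton_subset_iff]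
  rw [this, main {sSup I}, csSup_singleton]
  obtain ⟨hjoin, hdown, hsmul⟩ := hI
  apply Set.Subset.antisymm
  · intro x hx
    exact ⟨bot_le, (le_sSup hx).trans (le_top_smul (sSup I))⟩
  · intro x hx
    exact hdown _ (hsmul _ (hjoin I (subset_refl I)) ⊤) x hx.2
end

section
/- Let Q be a unital quantale, M a Q-module, and I a Q-ideal. For v, w ∈ M the conditions (a) i^v = i^w and (b) i^v ∗ w ∨ i^w ∗ v ∈ I are equivalent, where i^v = ⋁{a ∈ Q | a∗v ∈ I}. -/
/-- `i^v = ⨆ {a : Q | a • v ∈ I}`. -/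
def iv (Q : Type*) {M : Type*} [Monoid Q] [CompleteLattice Q] [CompleteLattice M]
    [QuantaleModule Q M] (I : Set M) (v : M) : Q := sSup {a : Q | a • v ∈ I}

/-- Right residual `b / a = ⨆ {c | c * a ≤ b}` in a quantale. -/
def rdiv {Q : Type*} [Monoid Q] [CompleteLattice Q] (b a : Q) : Q := sSup {c | c * a ≤ b}


lemma smul_mono_left {Q M : Type*} [Monoid Q] [CompleteLattice Q] [CompleteLattice M]
    [QuantaleModule Q M] {a b : Q} (h : a ≤ b) (v : M) : a • v ≤ b • v := by
  have : sSup {a, b} • v = ⨆ x ∈ ({a, b} : Set Q), x • v := QuantaleModule.sSup_smul _ _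
  have hb : sSup ({a, b} : Set Q) = b := by
    simp [sSup_pair, sup_eq_right.mpr h]
  rw [hb] at this
  rw [this]
  exact le_biSup (fun x => x • v) (by simp)

lemma iv_smul_mem {Q M : Type*} [Monoid Q] [CompleteLattice Q] [CompleteLattice M]
    [QuantaleModule Q M] {I : Set M} (hI : IsIdeal Q I) (v : M) : iv Q I v • v ∈ I := by
  rw [iv, QuantaleModule.sSup_smul]
  have : (⨆ a ∈ {a : Q | a • v ∈ I}, a • v) = sSup ((fun a => a • v) '' {a : Q | a • v ∈ I}) := by
    rw [sSup_image]
  rw [this]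
  exact hI.1 _ (by rintro x ⟨a, ha, rfl⟩; exact ha)

lemma mem_iff_le_iv {Q M : Type*} [Monoid Q] [CompleteLattice Q] [CompleteLattice M]
    [QuantaleModule Q M] {I : Set M} (hI : IsIdeal Q I) (a : Q) (v : M) :
    a • v ∈ I ↔ a ≤ iv Q I v := by
  constructor
  · exact fun h => le_sSup h
  · intro h
    exact hI.2.1 _ (iv_smul_mem hI v) _ (smul_mono_left h v)

/-- **Theorem.** For a `Q`-ideal `I` of `M` and `v, w ∈ M`:
`i^v = i^w` iff `i^v • w ⊔ i^w • v ∈ I`. -/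
theorem iv_eq_iff_mem (Q M : Type*) [Monoid Q] [CompleteLattice Q] [IsQuantale Q]
    [CompleteLattice M] [QuantaleModule Q M] (I : Set M) (hI : IsIdeal Q I) (v w : M) :
    iv Q I v = iv Q I w ↔ (iv Q I v • w ⊔ iv Q I w • v) ∈ I := by
  constructor
  · intro h
    have h1 : iv Q I v • w ∈ I := by rw [h]; exact iv_smul_mem hI w
    have h2 : iv Q I w • v ∈ I := by rw [← h]; exact iv_smul_mem hI v
    have : sSup {iv Q I v • w, iv Q I w • v} ∈ I := hI.1 _ (by
      rintro x (rfl | rfl) <;> assumption)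
    simpa [sSup_pair] using this
  · intro h
    have h1 : iv Q I v • w ∈ I := hI.2.1 _ h _ le_sup_left
    have h2 : iv Q I w • v ∈ I := hI.2.1 _ h _ le_sup_right
    exact le_antisymm ((mem_iff_le_iv hI _ _).mp h1) ((mem_iff_le_iv hI _ _).mp h2)
end

section
/- For any unital quantale Q, the two-sided ideals of Q are precisely the intervals [⊥, a] where a satisfies ⊤·a·⊤ = a; moreover, for any subset S ⊆ Q the ideal generated by S equals [⊥, ⊤·(⋁S)·⊤], so every two-sided ideal of Q is principal. -/
/-- A two-sided ideal of a quantale `Q`: closed under arbitrary joins, downward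
closed, and closed under left and right multiplication by arbitrary elements. -/
def IsTwoSidedIdeal {Q : Type*} [Monoid Q] [CompleteLattice Q] (I : Set Q) : Prop :=
  (∀ S ⊆ I, sSup S ∈ I) ∧ (∀ x ∈ I, ∀ y, y ≤ x → y ∈ I) ∧
  (∀ x ∈ I, ∀ a : Q, a * x ∈ I ∧ x * a ∈ I)

section Aux

variable {Q : Type*} [Monoid Q] [CompleteLattice Q] [IsQuantale Q]

lemma aux_le_top_mul_top (x : Q) : x ≤ ⊤ * x * ⊤ := by
  calc x = 1 * x * 1 := by simp
  _ ≤ ⊤ * x * ⊤ := by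
      exact mul_le_mul' (mul_le_mul' le_top le_rfl) le_top

lemma aux_top_mul_mem {I : Set Q} (hI : IsTwoSidedIdeal I) {x : Q} (hx : x ∈ I) :
    ⊤ * x ∈ I := by
  obtain ⟨hsup, hdown, hmul⟩ := hI
  have : (⊤ : Q) * x = sSup ((· * x) '' Set.univ) := by
    rw [← sSup_univ, IsQuantale.sSup_mul_distrib]
    rw [sSup_image]
  rw [this]
  exact hsup _ (by rintro _ ⟨a, -, rfl⟩; exact (hmul x hx a).1)

lemma aux_mul_top_mem {I : Set Q} (hI : IsTwoSidedIdeal I) {x : Q} (hx : x ∈ I) :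
    x * ⊤ ∈ I := by
  obtain ⟨hsup, hdown, hmul⟩ := hI
  have : x * (⊤ : Q) = sSup ((x * ·) '' Set.univ) := by
    rw [← sSup_univ, IsQuantale.mul_sSup_distrib]
    rw [sSup_image]
  rw [this]
  exact hsup _ (by rintro _ ⟨a, -, rfl⟩; exact (hmul x hx a).2)

lemma aux_Icc_ideal {a : Q} (ha : ⊤ * a * ⊤ = a) : IsTwoSidedIdeal (Set.Icc ⊥ a) := by
  have h1 : (⊤ : Q) * a ≤ a := by
    calc ⊤ * a = ⊤ * a * 1 := by simp
    _ ≤ ⊤ * a * ⊤ := mul_le_mul' le_rfl le_top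
    _ = a := ha
  have h2 : a * (⊤ : Q) ≤ a := by
    calc a * ⊤ = 1 * (a * ⊤) := by simp
    _ ≤ ⊤ * a * ⊤ := by rw [mul_assoc]; exact mul_le_mul' le_top le_rfl
    _ = a := ha
  refine ⟨fun S hS => ⟨bot_le, sSup_le fun x hx => (hS hx).2⟩,
    fun x hx y hy => ⟨bot_le, hy.trans hx.2⟩, fun x hx b => ?_⟩
  constructor
  · exact ⟨bot_le, le_trans (mul_le_mul' le_top hx.2) h1⟩
  · exact ⟨bot_le, le_trans (mul_le_mul' hx.2 le_top) h2⟩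

lemma aux_char {I : Set Q} (hI : IsTwoSidedIdeal I) :
    ∃ a : Q, ⊤ * a * ⊤ = a ∧ I = Set.Icc ⊥ a := by
  refine ⟨sSup I, ?_, ?_⟩
  · have hmem : sSup I ∈ I := hI.1 I le_rfl
    have : ⊤ * sSup I * ⊤ ∈ I := aux_mul_top_mem hI (aux_top_mul_mem hI hmem)
    exact le_antisymm (le_sSup this) (aux_le_top_mul_top _)
  · ext x
    exact ⟨fun hx => ⟨bot_le, le_sSup hx⟩,
      fun hx => hI.2.1 _ (hI.1 I le_rfl) x hx.2⟩

end Aux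

/-- **Theorem.** The two-sided ideals of a unital quantale `Q` are precisely the
intervals `[⊥, a]` with `⊤·a·⊤ = a`; the ideal generated by `S ⊆ Q` is
`[⊥, ⊤·(⋁S)·⊤]`; hence every two-sided ideal is principal. -/
theorem twoSidedIdeal_characterization (Q : Type*) [Monoid Q] [CompleteLattice Q]
    [IsQuantale Q] :
    (∀ I : Set Q, IsTwoSidedIdeal I ↔ ∃ a : Q, ⊤ * a * ⊤ = a ∧ I = Set.Icc ⊥ a) ∧
    (∀ S : Set Q, ⋂₀ {I : Set Q | IsTwoSidedIdeal I ∧ S ⊆ I} =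
      Set.Icc ⊥ (⊤ * sSup S * ⊤)) ∧
    (∀ I : Set Q, IsTwoSidedIdeal I →
      ∃ a : Q, I = ⋂₀ {J : Set Q | IsTwoSidedIdeal J ∧ a ∈ J}) := by
  have htt : (⊤ : Q) * ⊤ = ⊤ := le_antisymm le_top (by
    calc (⊤:Q) = 1 * ⊤ := by simp
    _ ≤ ⊤ * ⊤ := mul_le_mul' le_top le_rfl)
  have hfix : ∀ a : Q, ⊤ * (⊤ * a * ⊤) * ⊤ = ⊤ * a * ⊤ := fun a => by
    simp only [mul_assoc, htt]
    rw [← mul_assoc, ← mul_assoc, htt, mul_assoc]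
  have hgen : ∀ S : Set Q, ⋂₀ {I : Set Q | IsTwoSidedIdeal I ∧ S ⊆ I} =
      Set.Icc ⊥ (⊤ * sSup S * ⊤) := by
    intro S
    apply le_antisymm
    · intro x hx
      exact hx _ ⟨aux_Icc_ideal (hfix _),
        fun s hs => ⟨bot_le, le_trans (le_sSup hs) (aux_le_top_mul_top _)⟩⟩
    · rintro x ⟨-, hx⟩ I ⟨hI, hSI⟩
      have hsSup : sSup S ∈ I := hI.1 S hSI
      have : ⊤ * sSup S * ⊤ ∈ I := aux_mul_top_mem hI (aux_top_mul_mem hI hsSup)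
      exact hI.2.1 _ this x hx
  refine ⟨fun I => ⟨aux_char, ?_⟩, hgen, fun I hI => ?_⟩
  · rintro ⟨a, ha, rfl⟩; exact aux_Icc_ideal ha
  · obtain ⟨a, ha, rfl⟩ := aux_char hI
    refine ⟨a, ?_⟩
    have : {J : Set Q | IsTwoSidedIdeal J ∧ a ∈ J} =
        {J : Set Q | IsTwoSidedIdeal J ∧ ({a} : Set Q) ⊆ J} := by
      ext J; simp [Set.singleton_subset_iff]
    rw [this, hgen {a}, sSup_singleton, ha]
end

section
/- Let f : Q → Q' be a quantale homomorphism between unital quantales, with residuum f_∗ (so f(x) ≤ y ⟺ x ≤ f_∗(y)) and nucleus γ = f_∗ ∘ f. Then the fixed points of γ coincide with the set of (ker f)-saturated elements of Q, where ker f = {(a,b) | f(a) = f(b)} and s is (ker f)-saturated iff for all a,b with f(a)=f(b) and all c,d ∈ Q, c·a·d ≤ s ⟺ c·b·d ≤ s. -/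
/-- An element `s` of a quantale is `R`-saturated if for all `(a,b) ∈ R` and all
`c, d ∈ Q`, `c·a·d ≤ s ⟺ c·b·d ≤ s`. -/
def Saturated {Q : Type*} [Monoid Q] [CompleteLattice Q] (R : Set (Q × Q)) (s : Q) : Prop :=
  ∀ p ∈ R, ∀ c d : Q, (c * p.1 * d ≤ s ↔ c * p.2 * d ≤ s)

/-- A homomorphism of unital quantales: preserves arbitrary joins, multiplication,
and the unit. -/
def IsQuantaleHom {Q R : Type*} [Monoid Q] [CompleteLattice Q] [Monoid R] [CompleteLattice R]
    (f : Q → R) : Prop :=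
  (∀ S : Set Q, f (sSup S) = ⨆ a ∈ S, f a) ∧ (∀ a b : Q, f (a * b) = f a * f b) ∧ f 1 = 1

/-- **Theorem.** For a quantale homomorphism `f : Q → Q′` with residuum `f_∗`
(`f x ≤ y ⟺ x ≤ f_∗ y`) and nucleus `γ = f_∗ ∘ f`, the fixed points of `γ` are
exactly the `(ker f)`-saturated elements of `Q`. -/
theorem nucleus_fixed_points_eq_saturated (Q Q' : Type*) [Monoid Q] [CompleteLattice Q]
    [IsQuantale Q] [Monoid Q'] [CompleteLattice Q'] [IsQuantale Q']
    (f : Q → Q') (hf : IsQuantaleHom f) (fs : Q' → Q)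
    (adj : ∀ (x : Q) (y : Q'), f x ≤ y ↔ x ≤ fs y) :
    {s : Q | fs (f s) = s} = {s : Q | Saturated {p : Q × Q | f p.1 = f p.2} s} := by
  obtain ⟨hsup, hmul, hone⟩ := hf
  have hmono : ∀ a b : Q, a ≤ b → f a ≤ f b := by
    intro a b hab
    have : f b = ⨆ x ∈ ({a, b} : Set Q), f x := by
      rw [← hsup, sSup_pair, sup_eq_right.mpr hab]
    rw [this]
    exact le_biSup f (by simp)
  ext s
  simp only [Set.mem_setOf_eq]
  constructor
  · intro hfix p hp c d
    have key : ∀ x y : Q, f x = f y → c * x * d ≤ s → c * y * d ≤ s := by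
      intro x y hxy h
      have h1 : f (c * x * d) ≤ f s := hmono _ _ h
      have h2 : f (c * y * d) ≤ f s := by
        rwa [hmul, hmul, hxy, ← hmul, ← hmul] at h1
      have := (adj _ _).mp h2
      rwa [hfix] at this
    exact ⟨key p.1 p.2 hp, key p.2 p.1 hp.symm⟩
  · intro hsat
    have hle : s ≤ fs (f s) := (adj s (f s)).mp le_rfl
    have hfeq : f (fs (f s)) = f s :=
      le_antisymm ((adj _ _).mpr le_rfl) (hmono _ _ hle)
    have := (hsat (fs (f s), s) hfeq 1 1).mpr (by simp)
    exact le_antisymm (by simpa using this) hle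
end

section
/- Let Q be a unital quantale and R ⊆ Q × Q, and define ρ_R(a) = ⋀{s ∈ Q_R | a ≤ s}, where Q_R is the set of R-saturated elements. Then ρ_R is a quantic nucleus on Q (a closure operator with ρ_R(a)·ρ_R(b) ≤ ρ_R(a·b)) whose image is exactly Q_R. -/
/-- The closure `ρ_R(a) = ⨅ {s ∈ Q_R | a ≤ s}`. -/
def rhoR {Q : Type*} [Monoid Q] [CompleteLattice Q] (R : Set (Q × Q)) (a : Q) : Q :=
  sInf {s : Q | Saturated R s ∧ a ≤ s}

lemma saturated_sInf {Q : Type*} [Monoid Q] [CompleteLattice Q] (R : Set (Q × Q))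
    (S : Set Q) (h : ∀ s ∈ S, Saturated R s) : Saturated R (sInf S) := by
  intro p hp c d
  simp only [le_sInf_iff]
  exact ⟨fun H s hs => (h s hs p hp c d).1 (H s hs),
         fun H s hs => (h s hs p hp c d).2 (H s hs)⟩

lemma saturated_rhoR {Q : Type*} [Monoid Q] [CompleteLattice Q] (R : Set (Q × Q)) (a : Q) :
    Saturated R (rhoR R a) :=
  saturated_sInf R _ (fun _ hs => hs.1)

lemma le_rhoR {Q : Type*} [Monoid Q] [CompleteLattice Q] (R : Set (Q × Q)) (a : Q) :
    a ≤ rhoR R a := le_sInf fun _ hs => hs.2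

lemma rhoR_le {Q : Type*} [Monoid Q] [CompleteLattice Q] (R : Set (Q × Q)) {a s : Q}
    (hs : Saturated R s) (h : a ≤ s) : rhoR R a ≤ s := sInf_le ⟨hs, h⟩

/-- **Theorem.** `ρ_R` is a quantic nucleus on `Q` (monotone, extensive, idempotent,
and `ρ_R(a)·ρ_R(b) ≤ ρ_R(a·b)`) whose image is exactly the set of `R`-saturated
elements. -/
theorem rhoR_quantic_nucleus (Q : Type*) [Monoid Q] [CompleteLattice Q] [IsQuantale Q]
    (R : Set (Q × Q)) :
    Monotone (rhoR R) ∧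
    (∀ a : Q, a ≤ rhoR R a) ∧
    (∀ a : Q, rhoR R (rhoR R a) = rhoR R a) ∧
    (∀ a b : Q, rhoR R a * rhoR R b ≤ rhoR R (a * b)) ∧
    Set.range (rhoR R) = {s : Q | Saturated R s} := by
  have hmono : Monotone (rhoR R) := fun a b hab =>
    le_sInf fun s hs => sInf_le ⟨hs.1, hab.trans hs.2⟩
  refine ⟨hmono, le_rhoR R, ?_, ?_, ?_⟩
  · intro a
    exact le_antisymm (rhoR_le R (saturated_rhoR R a) le_rfl) (le_rhoR R _)
  · intro a b
    -- It suffices to show ρa * ρb ≤ s for any saturated s with a*b ≤ s.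
    apply le_sInf
    rintro s ⟨hs, hab⟩
    -- Step 1: a * ρb ≤ s, via the right residual r = sSup {y | a * y ≤ s}.
    have key : ∀ x : Q, x * b ≤ s → x * rhoR R b ≤ s := by
      intro x hx
      set r : Q := sSup {y | x * y ≤ s} with hr
      have hmem : ∀ y : Q, y ≤ r ↔ x * y ≤ s := by
        intro y
        constructor
        · intro hy
          calc x * y ≤ x * r := mul_le_mul_right hy x
            _ = ⨆ z ∈ {y | x * y ≤ s}, x * z := mul_sSup_distrib
            _ ≤ s := by simp only [iSup_le_iff]; exact fun z hz => hz
        · intro hy; exact le_sSup hy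
      have hrsat : Saturated R r := by
        intro p hp c d
        rw [hmem, hmem]
        simpa only [mul_assoc] using hs p hp (x * c) d
      have : rhoR R b ≤ r := rhoR_le R hrsat ((hmem b).2 hx)
      exact (hmem _).1 this
    have h1 : a * rhoR R b ≤ s := key a hab
    -- Step 2: ρa * ρb ≤ s, via the left residual l = sSup {z | z * ρb ≤ s}.
    set l : Q := sSup {z | z * rhoR R b ≤ s} with hl
    have hmem : ∀ z : Q, z ≤ l ↔ z * rhoR R b ≤ s := by
      intro z
      constructor
      · intro hz
        calc z * rhoR R b ≤ l * rhoR R b := mul_le_mul_left hz _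
          _ = ⨆ w ∈ {z | z * rhoR R b ≤ s}, w * rhoR R b := sSup_mul_distrib
          _ ≤ s := by simp only [iSup_le_iff]; exact fun w hw => hw
      · intro hz; exact le_sSup hz
    have hlsat : Saturated R l := by
      intro p hp c d
      rw [hmem, hmem]
      simpa only [mul_assoc] using hs p hp c (d * rhoR R b)
    have : rhoR R a ≤ l := rhoR_le R hlsat ((hmem a).2 h1)
    exact (hmem _).1 this
  · ext s
    constructor
    · rintro ⟨a, rfl⟩; exact saturated_rhoR R a
    · intro hs
      exact ⟨s, le_antisymm (rhoR_le R hs le_rfl) (le_rhoR R s)⟩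
end
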